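/- Let E_ρ and F_ν be position and momentum observables on H = L²(ℝ) (E_ρ(X) = multiplication by ρ(X−·); F_ν(Y) = 𝓕⁻¹ E_ν(Y) 𝓕). Define the commutation domain com(E_ρ, F_ν) = {ψ ∈ H : E_ρ(X)F_ν(Y)ψ = F_ν(Y)E_ρ(X)ψ for all Borel X, Y}. Then com(E_ρ, F_ν) is a closed subspace of H invariant under all Weyl operators W(q,p) = e^{i(pQ−qP)}; consequently, by irreducibility of the Weyl representation, com(E_ρ, F_ν) is either {0} or all of H. -/

import Mathlib

/-!
The commutation domain is an intersection of kernels of the bounded operators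
`E X ∘ F Y - F Y ∘ E X`, hence a closed subspace. The Weyl operators intertwine `E(X)` with
`E(X - q)` and `F(Y)` with `F(Y - p)`, so they map the domain into itself.
Irreducibility is proved directly: if `g` is orthogonal to `W(q, p) ψ` for all `q, p`, then
for fixed `q` the integrable function `conj (ψ (· - q)) * g` has vanishing Fourier transform, so
`ψ (x - q) g(x) = 0` almost everywhere for every `q`, and Fubini forces `ψ = 0` or `g = 0`.
-/

open MeasureTheory Complex

noncomputable section

abbrev L2 : Type := Lp ℂ 2 (volume : Measure ℝ)

/-- `T` is the operator of multiplication by the bounded function `x ↦ ρ(X − x)`. -/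
def IsMulByMeas (ρ : Measure ℝ) (X : Set ℝ) (T : L2 →L[ℂ] L2) : Prop :=
  ∀ f : L2, (T f : ℝ → ℂ) =ᵐ[volume]
    fun x => ((ρ ((· + x) ⁻¹' X)).toReal : ℂ) * (f : ℝ → ℂ) x

open Real FourierTransform ComplexConjugate

theorem MeasureTheory.Integrable.ae_eq_zero_of_fourier_eq_zero
    {V E : Type*} [NormedAddCommGroup V] [InnerProductSpace ℝ V] [FiniteDimensional ℝ V]
    [MeasurableSpace V] [BorelSpace V] [NormedAddCommGroup E] [NormedSpace ℂ E] [CompleteSpace E]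
    {f : V → E} (hf : Integrable f) (h : 𝓕 f = 0) : f =ᵐ[volume] 0 := by
  refine ae_eq_zero_of_integral_contDiff_smul_eq_zero hf.locallyIntegrable fun g hg hgc => ?_
  let ψ : SchwartzMap V ℂ := 𝓕⁻
    ((hgc.comp_left (g := ((↑) : ℝ → ℂ)) ofReal_zero).toSchwartzMap (ofRealCLM.contDiff.comp hg))
  have hψ : 𝓕 (ψ : V → ℂ) = fun x => (g x : ℂ) := by
    rw [← SchwartzMap.fourier_coe, FourierTransform.fourier_fourierInv_eq]; rfl
  have hflip : (innerₗ V).flip = innerₗ V := by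
    ext; exact real_inner_comm _ _
  -- `g` is the Fourier transform of a Schwartz function, and `𝓕` is self-adjoint.
  calc ∫ x, g x • f x = ∫ x, 𝓕 (ψ : V → ℂ) x • f x := by simp_rw [hψ, Complex.coe_smul]
    _ = ∫ x, ψ x • 𝓕 f x := by
        have := VectorFourier.integral_fourierIntegral_smul_eq_flip (L := innerₗ V) (μ := volume)
          (ν := volume) continuous_fourierChar continuous_inner ψ.integrable hf
        rwa [hflip] at this
    _ = 0 := by simp [h]

theorem ae_eq_zero_or_ae_eq_zero_of_forall_ae_translate
    {G M₀ : Type*} [MeasurableSpace G] [AddGroup G] [MeasurableAdd₂ G] [MeasurableNeg G]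
    {μ : Measure G} [SFinite μ] [μ.IsAddLeftInvariant] [μ.IsNegInvariant]
    [MulZeroClass M₀] [NoZeroDivisors M₀] [MeasurableSpace M₀] [MeasurableSingletonClass M₀]
    {f g : G → M₀} (hf : Measurable f) (hg : Measurable g)
    (h : ∀ q, ∀ᵐ x ∂μ, f (x - q) * g x = 0) : f =ᵐ[μ] 0 ∨ g =ᵐ[μ] 0 := by
  have hzero : MeasurableSet ({0} : Set M₀) := measurableSet_singleton 0
  have hswap : ∀ᵐ x ∂μ, ∀ᵐ q ∂μ, f (x - q) = 0 ∨ g x = 0 :=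
    (Measure.ae_ae_comm (p := fun q x => f (x - q) = 0 ∨ g x = 0)
      (((hf.comp (measurable_snd.sub measurable_fst)) hzero).union
        ((hg.comp measurable_snd) hzero))).1
      (ae_of_all _ fun q => (h q).mono fun x hx => mul_eq_zero.1 hx)
  by_cases hg0 : g =ᵐ[μ] 0
  · exact .inr hg0
  obtain ⟨x, hgx, hx⟩ := ((Filter.not_eventually.1 hg0).and_eventually hswap).exists
  have hsub := Measure.measurePreserving_sub_left μ x
  have hfx := (ae_map_iff (p := fun y => f y = 0) hsub.measurable.aemeasurable (hf hzero)).2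
    (hx.mono fun q hq => hq.resolve_right hgx)
  exact .inl (hsub.map_eq ▸ hfx)

section CommDomain

variable {α R M : Type*} [MeasurableSpace α] [Semiring R] [TopologicalSpace M] [AddCommMonoid M]
  [Module R M]

def commDomain (E F : Set α → M →L[R] M) : Submodule R M where
  carrier := {ψ | ∀ X Y, MeasurableSet X → MeasurableSet Y → E X (F Y ψ) = F Y (E X ψ)}
  add_mem' ha hb X Y hX hY := by simp only [map_add, ha X Y hX hY, hb X Y hX hY]
  zero_mem' := by simp
  smul_mem' c _ hψ X Y hX hY := by simp only [map_smul, hψ X Y hX hY]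

theorem isClosed_commDomain [T2Space M] (E F : Set α → M →L[R] M) :
    IsClosed (commDomain E F : Set M) := by
  change IsClosed {ψ | ∀ X Y, MeasurableSet X → MeasurableSet Y → E X (F Y ψ) = F Y (E X ψ)}
  simp only [Set.ofPred_forall]
  exact isClosed_iInter fun X => isClosed_iInter fun Y => isClosed_iInter fun _ =>
    isClosed_iInter fun _ => isClosed_eq (by fun_prop) (by fun_prop)

theorem map_mem_commDomain {E F : Set α → M →L[R] M} {U : M →L[R] M} {σ τ : Set α → Set α}
    (hσ : ∀ X, MeasurableSet X → MeasurableSet (σ X))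
    (hτ : ∀ Y, MeasurableSet Y → MeasurableSet (τ Y))
    (hE : ∀ X, MeasurableSet X → E X ∘L U = U ∘L E (σ X))
    (hF : ∀ Y, MeasurableSet Y → F Y ∘L U = U ∘L F (τ Y))
    {ψ : M} (hψ : ψ ∈ commDomain E F) : U ψ ∈ commDomain E F := by
  intro X Y hX hY
  have hE' (φ : M) : E X (U φ) = U (E (σ X) φ) := DFunLike.congr_fun (hE X hX) φ
  have hF' (φ : M) : F Y (U φ) = U (F (τ Y) φ) := DFunLike.congr_fun (hF Y hY) φ
  rw [hE', hF', hE', hF', hψ _ _ (hσ X hX) (hτ Y hY)]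

end CommDomain

def IsWeylOperator (q p : ℝ) (T : L2 →L[ℂ] L2) : Prop :=
  ∀ ψ : L2, (T ψ : ℝ → ℂ) =ᵐ[volume]
    fun x => Complex.exp (Complex.I * p * (x - q / 2)) * (ψ : ℝ → ℂ) (x - q)

theorem IsMulByMeas.comp_weylOperator {ρ : Measure ℝ} {X : Set ℝ} {q p : ℝ}
    {T T' U : L2 →L[ℂ] L2} (hT : IsMulByMeas ρ X T) (hT' : IsMulByMeas ρ ((· + q) ⁻¹' X) T')
    (hU : IsWeylOperator q p U) : T ∘L U = U ∘L T' := by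
  ext1 ψ
  refine Lp.ext ?_
  have hT'_shift := (measurePreserving_sub_right volume q).quasiMeasurePreserving.ae_eq_comp (hT' ψ)
  filter_upwards [hT (U ψ), hU ψ, hU (T' ψ), hT'_shift] with x h₁ h₂ h₃ h₄
  simp only [ContinuousLinearMap.comp_apply, Function.comp_apply] at h₁ h₂ h₃ h₄ ⊢
  rw [h₁, h₂, h₃, h₄, Set.preimage_preimage]
  simp only [add_assoc, sub_add_cancel]
  ring

theorem integrable_conj_translate_mul (ψ g : L2) (q : ℝ) :
    Integrable fun x => conj ((ψ : ℝ → ℂ) (x - q)) * (g : ℝ → ℂ) x :=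
  ((Lp.memLp ψ).comp_measurePreserving (measurePreserving_sub_right volume q)).star.integrable_mul
    (Lp.memLp g) (p := 2) (q := 2)

theorem IsWeylOperator.inner_apply_eq_fourier {q w : ℝ} {U : L2 →L[ℂ] L2}
    (hU : IsWeylOperator q (2 * π * w) U) (ψ g : L2) :
    inner ℂ (U ψ) g =
      cexp (π * w * q * I) * 𝓕 (fun x => conj ((ψ : ℝ → ℂ) (x - q)) * (g : ℝ → ℂ) x) w := by
  rw [L2.inner_def, Real.fourier_real_eq_integral_exp_smul, ← integral_const_mul]
  refine integral_congr_ae ((hU ψ).mono fun x hx => ?_)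
  have hphase :
      conj (I * (2 * π * w : ℝ) * (x - q / 2)) = π * w * q * I + (-2 * π * x * w : ℝ) * I := by
    simp only [map_mul, map_sub, map_div₀, conj_I, conj_ofReal, map_ofNat]
    push_cast
    ring
  simp only at hx ⊢
  rw [RCLike.inner_apply, hx, map_mul, ← exp_conj, hphase, Complex.exp_add, smul_eq_mul]
  ring

theorem eq_zero_of_forall_inner_weyl_eq_zero {W : ℝ → ℝ → L2 →L[ℂ] L2}
    (hW : ∀ q p, IsWeylOperator q p (W q p)) {ψ g : L2} (hψ : ψ ≠ 0)
    (h : ∀ q p, inner ℂ (W q p ψ) g = 0) : g = 0 := by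
  have hprod (q : ℝ) : ∀ᵐ x, conj ((ψ : ℝ → ℂ) (x - q)) * (g : ℝ → ℂ) x = 0 := by
    refine (integrable_conj_translate_mul ψ g q).ae_eq_zero_of_fourier_eq_zero (funext fun w => ?_)
    have := (hW q (2 * π * w)).inner_apply_eq_fourier ψ g
    rw [h] at this
    exact (mul_eq_zero.1 this.symm).resolve_left (Complex.exp_ne_zero _)
  rcases ae_eq_zero_or_ae_eq_zero_of_forall_ae_translate
    (continuous_conj.measurable.comp (Lp.stronglyMeasurable ψ).measurable)
    (Lp.stronglyMeasurable g).measurable hprod with hconj | hg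
  · exact absurd (Lp.eq_zero_iff_ae_eq_zero.2 (hconj.mono fun x hx => by simpa using hx)) hψ
  · exact Lp.eq_zero_iff_ae_eq_zero.2 hg

theorem Submodule.eq_bot_or_eq_top_of_weyl_invariant {W : ℝ → ℝ → L2 →L[ℂ] L2}
    (hW : ∀ q p, IsWeylOperator q p (W q p)) (K : Submodule ℂ L2) (hK : IsClosed (K : Set L2))
    (hinv : ∀ q p, ∀ ψ ∈ K, W q p ψ ∈ K) : K = ⊥ ∨ K = ⊤ := by
  refine or_iff_not_imp_left.2 fun hne => ?_
  obtain ⟨ψ, hψK, hψ⟩ := K.ne_bot_iff.1 hne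
  have : CompleteSpace K := hK.completeSpace_coe
  refine Submodule.orthogonal_eq_bot_iff.1 (Kᗮ.eq_bot_iff.2 fun g hg => ?_)
  exact eq_zero_of_forall_inner_weyl_eq_zero hW hψ fun q p =>
    K.inner_right_of_mem_orthogonal (hinv q p ψ hψK) hg

theorem stmt19 (ρ : Measure ℝ)
    (E F : Set ℝ → (L2 →L[ℂ] L2))
    (hE : ∀ X : Set ℝ, MeasurableSet X → IsMulByMeas ρ X (E X))
    (W : ℝ → ℝ → (L2 →L[ℂ] L2))
    (hW : ∀ q p : ℝ, ∀ ψ : L2, (W q p ψ : ℝ → ℂ) =ᵐ[volume]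
      fun x => Complex.exp (Complex.I * p * (x - q / 2)) * (ψ : ℝ → ℂ) (x - q))
    (hFcov : ∀ q p : ℝ, ∀ Y : Set ℝ, MeasurableSet Y →
      W q p ∘L F Y = F ((· + p) '' Y) ∘L W q p) :
    IsClosed {ψ : L2 | ∀ X Y : Set ℝ, MeasurableSet X → MeasurableSet Y →
        E X (F Y ψ) = F Y (E X ψ)} ∧
    ((0 : L2) ∈ {ψ : L2 | ∀ X Y : Set ℝ, MeasurableSet X → MeasurableSet Y →
        E X (F Y ψ) = F Y (E X ψ)}) ∧
    (∀ (c : ℂ) (ψ ψ' : L2),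
      (∀ X Y : Set ℝ, MeasurableSet X → MeasurableSet Y → E X (F Y ψ) = F Y (E X ψ)) →
      (∀ X Y : Set ℝ, MeasurableSet X → MeasurableSet Y → E X (F Y ψ') = F Y (E X ψ')) →
      (∀ X Y : Set ℝ, MeasurableSet X → MeasurableSet Y →
        E X (F Y (c • ψ + ψ')) = F Y (E X (c • ψ + ψ')))) ∧
    (∀ q p : ℝ, ∀ ψ : L2,
      (∀ X Y : Set ℝ, MeasurableSet X → MeasurableSet Y → E X (F Y ψ) = F Y (E X ψ)) →
      (∀ X Y : Set ℝ, MeasurableSet X → MeasurableSet Y →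
        E X (F Y (W q p ψ)) = F Y (E X (W q p ψ)))) ∧
    ({ψ : L2 | ∀ X Y : Set ℝ, MeasurableSet X → MeasurableSet Y →
        E X (F Y ψ) = F Y (E X ψ)} = {0} ∨
     {ψ : L2 | ∀ X Y : Set ℝ, MeasurableSet X → MeasurableSet Y →
        E X (F Y ψ) = F Y (E X ψ)} = Set.univ) := by
  have hshift (a : ℝ) {X : Set ℝ} (hX : MeasurableSet X) : MeasurableSet ((· + a) ⁻¹' X) :=
    hX.preimage (measurable_add_const a)
  have hinv (q p : ℝ) (ψ : L2) (hψ : ψ ∈ commDomain E F) : W q p ψ ∈ commDomain E F := by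
    refine map_mem_commDomain (fun _ => hshift q) (fun _ => hshift p)
      (fun X hX => (hE X hX).comp_weylOperator (hE _ (hshift q hX)) (hW q p))
      (fun Y hY => ?_) hψ
    have hcov := hFcov q p _ (hshift p hY)
    rwa [Set.image_preimage_eq Y (add_right_surjective p), eq_comm] at hcov
  refine ⟨isClosed_commDomain E F, (commDomain E F).zero_mem,
    fun c ψ ψ' hψ hψ' => (commDomain E F).add_mem ((commDomain E F).smul_mem c hψ) hψ', hinv, ?_⟩
  rcases (commDomain E F).eq_bot_or_eq_top_of_weyl_invariant hW (isClosed_commDomain E F)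
    hinv with h | h
  · exact .inl (congrArg SetLike.coe h)
  · exact .inr (congrArg SetLike.coe h)
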